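/- Let A₁, A₂ ⊆ A and B₁, B₂ ⊆ B be subsets such that: (i) for all sequences a_i ∈ A₁ and a_i' ∈ A₂ that each leave every compact subset of A, d_X(f(a_i), f(a_i')) → ∞; and (ii) for all sequences b_i ∈ B₁ and b_i' ∈ B₂ that each leave every compact subset of B, d_Y(g(b_i), g(b_i')) → ∞. Then for all sequences (a_i, b_i) ∈ A₁ × B₁ and (a_i', b_i') ∈ A₂ × B₂ that each leave every compact subset of A × B, we have d_Γ((f(a_i), g(b_i)), (f(a_i'), g(b_i'))) → ∞. -/

import Mathlib

/-!
If the distances stay below `M` along a subsequence, cocompactness and invariance of `dΓ` show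
that the `Y`-coordinates `g bᵢ`, `g bᵢ'` stay at bounded distance. If the `g bᵢ` escape, so do
the `g bᵢ'`, hence `bᵢ` and `bᵢ'` escape and (ii) is contradicted. Otherwise, along a further
subsequence both `g bᵢ` and `g bᵢ'` stay in a ball around `y₀`, so (by metric properness of `g`)
`bᵢ`, `bᵢ'` stay in a compact set and `aᵢ`, `aᵢ'` must escape; by (i), `dX (f aᵢ) (f aᵢ')` is
unbounded. But choosing `γᵢ, γᵢ' ∈ Stab_Γ(y₀)` with `f aᵢ` near `γᵢ x₀` and `f aᵢ'` near `γᵢ' x₀`,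
the element `γᵢ⁻¹ γᵢ'` moves a point of a fixed compact set `L ⊆ X̂ × Y` to within `M` of
another point of `L`, so by proper discontinuity it ranges over a finite set, which bounds
`dX (f aᵢ) (f aᵢ')`.
-/

open Filter Topology Bornology Set

section DistanceFunction

variable {Z : Type*} [TopologicalSpace Z] (d : Z → Z → ℝ)

theorem continuous_of_ball_mem_nhds (hsymm : ∀ p q, d p q = d q p)
    (htri : ∀ p q r, d p r ≤ d p q + d q r) (hball : ∀ p, ∀ ε > 0, {q | d p q < ε} ∈ 𝓝 p)
    (u : Z) : Continuous (d u) := by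
  refine continuous_iff_continuousAt.2 fun q => Metric.tendsto_nhds.2 fun ε hε => ?_
  filter_upwards [hball q ε hε] with q' hq'
  rw [Real.dist_eq, abs_lt]
  constructor <;> linarith [htri u q q', htri u q' q, hsymm q' q]

theorem finite_setOf_dist_smul_le {Γ : Type*} [Group Γ] [MulAction Γ Z]
    (hcont : ∀ u, Continuous (d u)) (htri : ∀ p q r, d p r ≤ d p q + d q r)
    (hproper : ∀ p r, IsCompact {q | d p q ≤ r})
    (hpd : ∀ K : Set Z, IsCompact K → {γ : Γ | ∃ p ∈ K, γ • p ∈ K}.Finite)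
    {L : Set Z} (hL : IsCompact L) (M : ℝ) :
    {γ : Γ | ∃ q ∈ L, ∃ q' ∈ L, d q (γ • q') ≤ M}.Finite := by
  rcases L.eq_empty_or_nonempty with rfl | ⟨o, -⟩
  · simp
  obtain ⟨c, hc⟩ := hL.bddAbove_image (hcont o).continuousOn
  refine (hpd _ (hproper o (c + |M|))).subset ?_
  rintro γ ⟨q, hq, q', hq', hqq'⟩
  have hoq := hc (mem_image_of_mem _ hq)
  have hoq' := hc (mem_image_of_mem _ hq')
  exact ⟨q', show d o q' ≤ _ by linarith [abs_nonneg M],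
    show d o (γ • q') ≤ _ by linarith [le_abs_self M, htri o q (γ • q')]⟩

end DistanceFunction

theorem exists_dist_snd_le_of_dist_le {Γ Z Y : Type*} [Group Γ] [TopologicalSpace Z]
    [MulAction Γ Z] [PseudoMetricSpace Y] [MulAction Γ Y]
    (hisom : ∀ (γ : Γ) (y y' : Y), dist (γ • y) (γ • y') = dist y y')
    (d : Z × Y → Z × Y → ℝ) (hcont : ∀ u, Continuous (d u))
    (htri : ∀ p q r, d p r ≤ d p q + d q r) (hinv : ∀ (γ : Γ) p q, d (γ • p) (γ • q) = d p q)
    (hproper : ∀ p r, IsCompact {q | d p q ≤ r})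
    (hcocompact : ∃ K : Set (Z × Y), IsCompact K ∧ ∀ p, ∃ γ : Γ, γ • p ∈ K) (M : ℝ) :
    ∃ R, ∀ u v, d u v ≤ M → dist u.2 v.2 ≤ R := by
  obtain hZY | ⟨⟨o⟩⟩ := isEmpty_or_nonempty (Z × Y)
  · exact ⟨0, fun u => isEmptyElim u⟩
  obtain ⟨K, hK, hKcover⟩ := hcocompact
  obtain ⟨c, hc⟩ := hK.bddAbove_image (hcont o).continuousOn
  obtain ⟨s, hs⟩ := ((hproper o (c + |M|)).image continuous_snd).isBounded.subset_closedBall o.2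
  refine ⟨2 * s, fun u v huv => ?_⟩
  obtain ⟨γ, hγu⟩ := hKcover u
  have hou : d o (γ • u) ≤ c := hc (mem_image_of_mem _ hγu)
  have hov : d o (γ • v) ≤ c + M := by linarith [htri o (γ • u) (γ • v), hinv γ u v]
  have hu : dist (γ • u.2) o.2 ≤ s :=
    hs ⟨γ • u, show d o (γ • u) ≤ c + |M| by linarith [abs_nonneg M], rfl⟩
  have hv : dist (γ • v.2) o.2 ≤ s :=
    hs ⟨γ • v, show d o (γ • v) ≤ c + |M| by linarith [le_abs_self M], rfl⟩
  calc dist u.2 v.2 = dist (γ • u.2) (γ • v.2) := (hisom γ _ _).symm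
    _ ≤ dist (γ • u.2) o.2 + dist (γ • v.2) o.2 := dist_triangle_right _ _ _
    _ ≤ 2 * s := by linarith

section Orbit

variable {Γ Xh Y : Type*} [Group Γ] [MulAction Γ Xh] [MulAction Γ Y] {X : Set Xh}
  {dX : Xh → Xh → ℝ} {x₀ : Xh}

theorem dist_le_add_dist_smul (hXinv : ∀ (γ : Γ), ∀ x ∈ X, γ • x ∈ X)
    (hdXsymm : ∀ p ∈ X, ∀ q ∈ X, dX p q = dX q p)
    (hdXtri : ∀ p ∈ X, ∀ q ∈ X, ∀ r ∈ X, dX p r ≤ dX p q + dX q r)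
    (hdXinv : ∀ (γ : Γ), ∀ p ∈ X, ∀ q ∈ X, dX (γ • p) (γ • q) = dX p q) (hx₀ : x₀ ∈ X)
    {p p' : Xh} (hp : p ∈ X) (hp' : p' ∈ X) (γ γ' : Γ) :
    dX p p' ≤ dX p (γ • x₀) + dX x₀ ((γ⁻¹ * γ') • x₀) + dX p' (γ' • x₀) := by
  have hγ := hXinv γ x₀ hx₀
  have hγ' := hXinv γ' x₀ hx₀
  have hmid : dX (γ • x₀) (γ' • x₀) = dX x₀ ((γ⁻¹ * γ') • x₀) := by
    rw [← hdXinv γ _ hx₀ _ (hXinv _ _ hx₀), smul_smul, mul_inv_cancel_left]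
  linarith [hdXtri p hp _ hγ p' hp', hdXtri _ hγ _ hγ' p' hp', hdXsymm _ hγ' p' hp']

theorem inv_smul_mem_prod_closedBall [PseudoMetricSpace Y]
    (hisomY : ∀ (γ : Γ) (y y' : Y), dist (γ • y) (γ • y') = dist y y')
    (hXinv : ∀ (γ : Γ), ∀ x ∈ X, γ • x ∈ X) (hdXsymm : ∀ p ∈ X, ∀ q ∈ X, dX p q = dX q p)
    (hdXinv : ∀ (γ : Γ), ∀ p ∈ X, ∀ q ∈ X, dX (γ • p) (γ • q) = dX p q) (hx₀ : x₀ ∈ X)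
    {y₀ : Y} {D R : ℝ} {p : Xh} {y : Y} {γ : Γ} (hγ : γ • y₀ = y₀) (hp : p ∈ X)
    (hpγ : dX p (γ • x₀) ≤ D) (hy : dist y y₀ ≤ R) :
    γ⁻¹ • (p, y) ∈ {q ∈ X | dX x₀ q ≤ D} ×ˢ Metric.closedBall y₀ R := by
  refine ⟨⟨hXinv _ _ hp, ?_⟩, ?_⟩
  · calc dX x₀ (γ⁻¹ • p) = dX (γ • x₀) p := by
          rw [← hdXinv γ x₀ hx₀ _ (hXinv _ _ hp), smul_inv_smul]
      _ = dX p (γ • x₀) := hdXsymm _ (hXinv _ _ hx₀) _ hp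
      _ ≤ D := hpγ
  · change dist (γ⁻¹ • y) y₀ ≤ R
    rwa [← hisomY γ, smul_inv_smul, hγ]

end Orbit

theorem exists_dist_le_of_near_stabilizer_orbit {Γ Xh Y : Type*} [Group Γ] [TopologicalSpace Xh]
    [MulAction Γ Xh] [PseudoMetricSpace Y] [ProperSpace Y] [MulAction Γ Y]
    (hisomY : ∀ (γ : Γ) (y y' : Y), dist (γ • y) (γ • y') = dist y y')
    {X : Set Xh} (hXinv : ∀ (γ : Γ), ∀ x ∈ X, γ • x ∈ X) {dX : Xh → Xh → ℝ}
    (hdXsymm : ∀ p ∈ X, ∀ q ∈ X, dX p q = dX q p)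
    (hdXtri : ∀ p ∈ X, ∀ q ∈ X, ∀ r ∈ X, dX p r ≤ dX p q + dX q r)
    (hdXinv : ∀ (γ : Γ), ∀ p ∈ X, ∀ q ∈ X, dX (γ • p) (γ • q) = dX p q)
    {x₀ : Xh} (hx₀ : x₀ ∈ X) (hdXproper : ∀ r : ℝ, IsCompact {q ∈ X | dX x₀ q ≤ r})
    (hpd : ∀ K : Set (Xh × Y), IsCompact K → {γ : Γ | ∃ p ∈ K, γ • p ∈ K}.Finite)
    (dΓ : Xh × Y → Xh × Y → ℝ) (hcont : ∀ u, Continuous (dΓ u))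
    (htri : ∀ p q r, dΓ p r ≤ dΓ p q + dΓ q r)
    (hinv : ∀ (γ : Γ) (p q : Xh × Y), dΓ (γ • p) (γ • q) = dΓ p q)
    (hproper : ∀ (p : Xh × Y) (r : ℝ), IsCompact {q | dΓ p q ≤ r}) (y₀ : Y) (D R M : ℝ) :
    ∃ N, ∀ p ∈ X, ∀ p' ∈ X, ∀ (γ γ' : Γ) (y y' : Y), γ • y₀ = y₀ → γ' • y₀ = y₀ →
      dX p (γ • x₀) ≤ D → dX p' (γ' • x₀) ≤ D → dist y y₀ ≤ R → dist y' y₀ ≤ R →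
      dΓ (p, y) (p', y') ≤ M → dX p p' ≤ N := by
  have hF := finite_setOf_dist_smul_le dΓ hcont htri hproper hpd
    ((hdXproper D).prod (isCompact_closedBall y₀ R)) M
  obtain ⟨c, hc⟩ := (hF.image fun τ => dX x₀ (τ • x₀)).bddAbove
  refine ⟨2 * D + c, fun p hp p' hp' γ γ' y y' hγ hγ' hpγ hp'γ' hy hy' hM => ?_⟩
  have hτ : γ⁻¹ * γ' ∈ {τ : Γ | ∃ q ∈ {q ∈ X | dX x₀ q ≤ D} ×ˢ Metric.closedBall y₀ R,
      ∃ q' ∈ {q ∈ X | dX x₀ q ≤ D} ×ˢ Metric.closedBall y₀ R, dΓ q (τ • q') ≤ M} :=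
    ⟨_, inv_smul_mem_prod_closedBall hisomY hXinv hdXsymm hdXinv hx₀ hγ hp hpγ hy,
      _, inv_smul_mem_prod_closedBall hisomY hXinv hdXsymm hdXinv hx₀ hγ' hp' hp'γ' hy',
      by rwa [mul_smul, smul_inv_smul, hinv]⟩
  linarith [dist_le_add_dist_smul hXinv hdXsymm hdXtri hdXinv hx₀ hp hp' γ γ',
    hc (mem_image_of_mem _ hτ)]

section Sequences

variable {ι A B Y : Type*} [TopologicalSpace A] [TopologicalSpace B] [PseudoMetricSpace Y]
  {l : Filter ι}

theorem tendsto_cocompact_iff_finite {u : ℕ → A} :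
    Tendsto u atTop (cocompact A) ↔ ∀ C, IsCompact C → {i | u i ∈ C}.Finite := by
  simp only [hasBasis_cocompact.tendsto_right_iff, ← Nat.cofinite_eq_atTop, eventually_cofinite,
    mem_compl_iff, not_not]

theorem exists_strictMono_lt_of_not_tendsto_atTop {u : ℕ → ℝ} (h : ¬Tendsto u atTop atTop) :
    ∃ M, ∃ n : ℕ → ℕ, StrictMono n ∧ ∀ i, u (n i) < M := by
  simp only [tendsto_atTop, not_forall, not_eventually, not_le] at h
  obtain ⟨M, hM⟩ := h
  exact ⟨M, extraction_of_frequently_atTop hM⟩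

theorem tendsto_cobounded_of_dist_le {u v : ι → Y} (hu : Tendsto u l (cobounded Y)) (R : ℝ)
    (huv : ∀ᶠ i in l, dist (u i) (v i) ≤ R) : Tendsto v l (cobounded Y) := by
  intro S hS
  have hSc : IsBounded (Metric.cthickening R Sᶜ) :=
    (isBounded_compl_iff.2 (isCobounded_def.2 hS)).cthickening
  rw [mem_map]
  filter_upwards [hu (isBounded_def.1 hSc), huv] with i hi hd
  by_contra hvi
  exact hi (Metric.mem_cthickening_of_dist_le _ (v i) _ _ hvi hd)

theorem tendsto_cobounded_of_preimage_closedBall_subset {g : B → Y} (y : Y)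
    (hg : ∀ r, ∃ K, IsCompact K ∧ g ⁻¹' Metric.closedBall y r ⊆ K) :
    Tendsto g (cocompact B) (cobounded Y) := by
  refine (Metric.tendsto_dist_right_atTop_iff y).1 (tendsto_atTop.2 fun r => ?_)
  obtain ⟨K, hK, hgK⟩ := hg r
  filter_upwards [hK.compl_mem_cocompact] with x hx
  by_contra hxr
  exact hx (hgK (Metric.mem_closedBall.2 (not_le.1 hxr).le))

theorem Continuous.tendsto_cocompact_of_tendsto_cobounded_comp {g : B → Y} (hg : Continuous g)
    {u : ι → B} (h : Tendsto (g ∘ u) l (cobounded Y)) : Tendsto u l (cocompact B) :=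
  (tendsto_comap_iff.2 (h.mono_right Metric.cobounded_le_cocompact)).mono_right
    (comap_cocompact_le hg)

theorem tendsto_cocompact_fst_of_dist_le {g : B → Y} (y : Y)
    (hg : ∀ r, ∃ K, IsCompact K ∧ g ⁻¹' Metric.closedBall y r ⊆ K) {u : ι → A} {v : ι → B}
    (huv : Tendsto (fun i => (u i, v i)) l (cocompact (A × B))) (r : ℝ)
    (hv : ∀ᶠ i in l, dist (g (v i)) y ≤ r) : Tendsto u l (cocompact A) := by
  obtain ⟨K, hK, hgK⟩ := hg r
  refine hasBasis_cocompact.tendsto_right_iff.2 fun C hC => ?_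
  filter_upwards [huv.eventually (hC.prod hK).compl_mem_cocompact, hv] with i hCK hvr hu
  exact hCK ⟨hu, hgK hvr⟩

end Sequences

theorem stmt3_general
    {Γ : Type*} [Group Γ]
    {Xh : Type*} [TopologicalSpace Xh] [MulAction Γ Xh]
    {Y : Type*} [MetricSpace Y] [ProperSpace Y] [MulAction Γ Y]
    (hisomY : ∀ (γ : Γ) (y y' : Y), dist (γ • y) (γ • y') = dist y y')
    (X : Set Xh)
    (hXinv : ∀ (γ : Γ), ∀ x ∈ X, γ • x ∈ X)
    (dX : Xh → Xh → ℝ)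
    (hdXsymm : ∀ p ∈ X, ∀ q ∈ X, dX p q = dX q p)
    (hdXtri : ∀ p ∈ X, ∀ q ∈ X, ∀ r ∈ X, dX p r ≤ dX p q + dX q r)
    (hdXinv : ∀ (γ : Γ), ∀ p ∈ X, ∀ q ∈ X, dX (γ • p) (γ • q) = dX p q)
    (hdXproper : ∀ p ∈ X, ∀ r : ℝ, IsCompact {q ∈ X | dX p q ≤ r})
    -- the diagonal action of `Γ` on `X̂ × Y` is properly discontinuous and cocompact
    (hpd : ∀ K : Set (Xh × Y), IsCompact K → {γ : Γ | ∃ p ∈ K, γ • p ∈ K}.Finite)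
    (hcocompact : ∃ K : Set (Xh × Y), IsCompact K ∧ ∀ p : Xh × Y, ∃ γ : Γ, γ • p ∈ K)
    -- `dΓ` is a `Γ`-invariant proper metric on `X̂ × Y` inducing the product topology
    (dΓ : (Xh × Y) → (Xh × Y) → ℝ)
    (hsymm : ∀ p q, dΓ p q = dΓ q p)
    (htri : ∀ p q r, dΓ p r ≤ dΓ p q + dΓ q r)
    (hinv : ∀ (γ : Γ) (p q : Xh × Y), dΓ (γ • p) (γ • q) = dΓ p q)
    (hproper : ∀ (p : Xh × Y) (r : ℝ), IsCompact {q | dΓ p q ≤ r})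
    (htopo : ∀ (p : Xh × Y) (s : Set (Xh × Y)),
      s ∈ 𝓝 p ↔ ∃ ε > 0, {q | dΓ p q < ε} ⊆ s)
    -- basepoints
    (x₀ : Xh) (hx₀ : x₀ ∈ X) (y₀ : Y)
    {A : Type*} [TopologicalSpace A]
    {B : Type*} [TopologicalSpace B]
    (f : A → Xh) (hfX : ∀ a, f a ∈ X)
    -- `g : B → Y` is continuous and metrically proper
    (g : B → Y) (hgcont : Continuous g)
    (hgproper : ∀ (y : Y) (r : ℝ), ∃ K : Set B, IsCompact K ∧
      g ⁻¹' (Metric.closedBall y r) ⊆ K)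
    -- every point of `f(A)` lies within `dX`-distance `D` of `Stab_Γ(y₀) • x₀`
    (D : ℝ)
    (horb : ∀ a : A, ∃ γ : Γ, γ • y₀ = y₀ ∧ dX (f a) (γ • x₀) ≤ D)
    -- the subsets
    (A₁ A₂ : Set A) (B₁ B₂ : Set B)
    -- (i): images under `f` of sequences in `A₁`, `A₂` leaving every compact set diverge
    (hAdiv : ∀ a a' : ℕ → A, (∀ i, a i ∈ A₁) → (∀ i, a' i ∈ A₂) →
      (∀ C : Set A, IsCompact C → {i | a i ∈ C}.Finite) →
      (∀ C : Set A, IsCompact C → {i | a' i ∈ C}.Finite) →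
      Tendsto (fun i => dX (f (a i)) (f (a' i))) atTop atTop)
    -- (ii): images under `g` of sequences in `B₁`, `B₂` leaving every compact set diverge
    (hBdiv : ∀ b b' : ℕ → B, (∀ i, b i ∈ B₁) → (∀ i, b' i ∈ B₂) →
      (∀ C : Set B, IsCompact C → {i | b i ∈ C}.Finite) →
      (∀ C : Set B, IsCompact C → {i | b' i ∈ C}.Finite) →
      Tendsto (fun i => dist (g (b i)) (g (b' i))) atTop atTop) :
    ∀ (a a' : ℕ → A) (b b' : ℕ → B),
      (∀ i, a i ∈ A₁) → (∀ i, b i ∈ B₁) → (∀ i, a' i ∈ A₂) → (∀ i, b' i ∈ B₂) →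
      (∀ C : Set (A × B), IsCompact C → {i | (a i, b i) ∈ C}.Finite) →
      (∀ C : Set (A × B), IsCompact C → {i | (a' i, b' i) ∈ C}.Finite) →
      Tendsto (fun i => dΓ (f (a i), g (b i)) (f (a' i), g (b' i))) atTop atTop := by
  intro a a' b b' ha hb ha' hb' hab hab'
  simp only [← tendsto_cocompact_iff_finite] at hAdiv hBdiv hab hab'
  have hd := continuous_of_ball_mem_nhds dΓ hsymm htri fun p ε hε =>
    (htopo p _).2 ⟨ε, hε, subset_rfl⟩
  by_contra hdiv
  obtain ⟨M, n, hn, hM⟩ := exists_strictMono_lt_of_not_tendsto_atTop hdiv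
  obtain ⟨R, hR⟩ := exists_dist_snd_le_of_dist_le hisomY dΓ hd htri hinv hproper hcocompact M
  have hbb' : ∀ i, dist (g (b (n i))) (g (b' (n i))) ≤ R := fun i => hR _ _ (hM i).le
  by_cases hbn : Tendsto (fun i => g (b (n i))) atTop (cobounded Y)
  · have hb'n := tendsto_cobounded_of_dist_le hbn R (.of_forall hbb')
    exact not_bddAbove_of_tendsto_atTop (hBdiv _ _ (fun i => hb _) (fun i => hb' _)
      (hgcont.tendsto_cocompact_of_tendsto_cobounded_comp hbn)
      (hgcont.tendsto_cocompact_of_tendsto_cobounded_comp hb'n)) ⟨R, forall_mem_range.2 hbb'⟩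
  rw [← Metric.tendsto_dist_right_atTop_iff y₀] at hbn
  obtain ⟨r, m, hm, hr⟩ := exists_strictMono_lt_of_not_tendsto_atTop hbn
  have hR₀ : 0 ≤ R := dist_nonneg.trans (hbb' 0)
  have hbr : ∀ i, dist (g (b (n (m i)))) y₀ ≤ r + R := fun i => by linarith [hr i]
  have hb'r : ∀ i, dist (g (b' (n (m i)))) y₀ ≤ r + R := fun i => by
    linarith [hr i, hbb' (m i), dist_triangle_left (g (b' (n (m i)))) y₀ (g (b (n (m i))))]
  choose γ hγ hγD using horb
  obtain ⟨N, hN⟩ := exists_dist_le_of_near_stabilizer_orbit hisomY hXinv hdXsymm hdXtri hdXinv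
    hx₀ (hdXproper x₀ hx₀) hpd dΓ hd htri hinv hproper y₀ D (r + R) M
  have hnm := (hn.comp hm).tendsto_atTop
  refine not_bddAbove_of_tendsto_atTop (hAdiv _ _ (fun i => ha _) (fun i => ha' _)
    (tendsto_cocompact_fst_of_dist_le y₀ (hgproper y₀) (hab.comp hnm) _ (.of_forall hbr))
    (tendsto_cocompact_fst_of_dist_le y₀ (hgproper y₀) (hab'.comp hnm) _ (.of_forall hb'r)))
    ⟨N, forall_mem_range.2 fun i => ?_⟩
  exact hN _ (hfX _) _ (hfX _) _ _ _ _ (hγ _) (hγ _) (hγD _) (hγD _) (hbr i) (hb'r i) (hM (m i)).le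

/-- the expanding property of `h = f × g` in Theorem `S`.
With the full setup of Theorem `S`, suppose `A₁, A₂ ⊆ A` and `B₁, B₂ ⊆ B` are
such that (i) for any sequences in `A₁` and `A₂` each leaving every compact set
of `A`, the `dX`-distances of the `f`-images diverge, and (ii) similarly for
`B₁, B₂`, `g` and `dY`.  Then for any sequences in `A₁ × B₁` and `A₂ × B₂` each
leaving every compact set of `A × B`, the `dΓ`-distances of the images under
`h = f × g` diverge. -/
theorem stmt3
    {Γ : Type*} [Group Γ]
    {Xh : Type*} [TopologicalSpace Xh] [MulAction Γ Xh]
    (hcont : ∀ γ : Γ, Continuous (fun x : Xh => γ • x))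
    {Y : Type*} [MetricSpace Y] [ProperSpace Y] [MulAction Γ Y]
    (hisomY : ∀ (γ : Γ) (y y' : Y), dist (γ • y) (γ • y') = dist y y')
    (X : Set Xh)
    (hXinv : ∀ (γ : Γ), ∀ x ∈ X, γ • x ∈ X)
    (dX : Xh → Xh → ℝ)
    (hdXsymm : ∀ p ∈ X, ∀ q ∈ X, dX p q = dX q p)
    (hdXtri : ∀ p ∈ X, ∀ q ∈ X, ∀ r ∈ X, dX p r ≤ dX p q + dX q r)
    (hdXeq : ∀ p ∈ X, ∀ q ∈ X, (dX p q = 0 ↔ p = q))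
    (hdXinv : ∀ (γ : Γ), ∀ p ∈ X, ∀ q ∈ X, dX (γ • p) (γ • q) = dX p q)
    (hdXproper : ∀ p ∈ X, ∀ r : ℝ, IsCompact {q ∈ X | dX p q ≤ r})
    (hdXtopo : ∀ p ∈ X, ∀ s : Set Xh, s ∈ 𝓝[X] p ↔ ∃ ε > 0, {q ∈ X | dX p q < ε} ⊆ s)
    -- the diagonal action of `Γ` on `X̂ × Y` is properly discontinuous and cocompact
    (hpd : ∀ K : Set (Xh × Y), IsCompact K → {γ : Γ | ∃ p ∈ K, γ • p ∈ K}.Finite)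
    (hcocompact : ∃ K : Set (Xh × Y), IsCompact K ∧ ∀ p : Xh × Y, ∃ γ : Γ, γ • p ∈ K)
    -- `dΓ` is a `Γ`-invariant proper metric on `X̂ × Y` inducing the product topology
    (dΓ : (Xh × Y) → (Xh × Y) → ℝ)
    (hsymm : ∀ p q, dΓ p q = dΓ q p)
    (htri : ∀ p q r, dΓ p r ≤ dΓ p q + dΓ q r)
    (heq : ∀ p q, dΓ p q = 0 ↔ p = q)
    (hinv : ∀ (γ : Γ) (p q : Xh × Y), dΓ (γ • p) (γ • q) = dΓ p q)
    (hproper : ∀ (p : Xh × Y) (r : ℝ), IsCompact {q | dΓ p q ≤ r})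
    (htopo : ∀ (p : Xh × Y) (s : Set (Xh × Y)),
      s ∈ 𝓝 p ↔ ∃ ε > 0, {q | dΓ p q < ε} ⊆ s)
    -- basepoints
    (x₀ : Xh) (hx₀ : x₀ ∈ X) (y₀ : Y)
    -- `A` and `B` are locally compact, σ-compact, metrizable Hausdorff spaces
    {A : Type*} [TopologicalSpace A] [LocallyCompactSpace A] [SigmaCompactSpace A]
    [T2Space A] [TopologicalSpace.MetrizableSpace A]
    {B : Type*} [TopologicalSpace B] [LocallyCompactSpace B] [SigmaCompactSpace B]
    [T2Space B] [TopologicalSpace.MetrizableSpace B]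
    -- `f : A → X` is continuous and metrically proper
    (f : A → Xh) (hfX : ∀ a, f a ∈ X) (hfcont : Continuous f)
    (hfproper : ∀ p ∈ X, ∀ r : ℝ, ∃ K : Set A, IsCompact K ∧ {a | dX p (f a) ≤ r} ⊆ K)
    -- `g : B → Y` is continuous and metrically proper
    (g : B → Y) (hgcont : Continuous g)
    (hgproper : ∀ (y : Y) (r : ℝ), ∃ K : Set B, IsCompact K ∧
      g ⁻¹' (Metric.closedBall y r) ⊆ K)
    -- every point of `f(A)` lies within `dX`-distance `D` of `Stab_Γ(y₀) • x₀`
    (D : ℝ) (hD : 0 < D)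
    (horb : ∀ a : A, ∃ γ : Γ, γ • y₀ = y₀ ∧ dX (f a) (γ • x₀) ≤ D)
    -- the subsets
    (A₁ A₂ : Set A) (B₁ B₂ : Set B)
    -- (i): images under `f` of sequences in `A₁`, `A₂` leaving every compact set diverge
    (hAdiv : ∀ a a' : ℕ → A, (∀ i, a i ∈ A₁) → (∀ i, a' i ∈ A₂) →
      (∀ C : Set A, IsCompact C → {i | a i ∈ C}.Finite) →
      (∀ C : Set A, IsCompact C → {i | a' i ∈ C}.Finite) →
      Tendsto (fun i => dX (f (a i)) (f (a' i))) atTop atTop)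
    -- (ii): images under `g` of sequences in `B₁`, `B₂` leaving every compact set diverge
    (hBdiv : ∀ b b' : ℕ → B, (∀ i, b i ∈ B₁) → (∀ i, b' i ∈ B₂) →
      (∀ C : Set B, IsCompact C → {i | b i ∈ C}.Finite) →
      (∀ C : Set B, IsCompact C → {i | b' i ∈ C}.Finite) →
      Tendsto (fun i => dist (g (b i)) (g (b' i))) atTop atTop) :
    ∀ (a a' : ℕ → A) (b b' : ℕ → B),
      (∀ i, a i ∈ A₁) → (∀ i, b i ∈ B₁) → (∀ i, a' i ∈ A₂) → (∀ i, b' i ∈ B₂) →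
      (∀ C : Set (A × B), IsCompact C → {i | (a i, b i) ∈ C}.Finite) →
      (∀ C : Set (A × B), IsCompact C → {i | (a' i, b' i) ∈ C}.Finite) →
      Tendsto (fun i => dΓ (f (a i), g (b i)) (f (a' i), g (b' i))) atTop atTop :=
  stmt3_general hisomY X hXinv dX hdXsymm hdXtri hdXinv hdXproper hpd hcocompact dΓ hsymm htri hinv
    hproper htopo x₀ hx₀ y₀ f hfX g hgcont hgproper D horb A₁ A₂ B₁ B₂ hAdiv hBdiv
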